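/- Let H and P be phylogenetic trees, let σ be a map from the leaves of P to the leaves of H, and let φ be a reconciliation of (H,P,σ) such that every switching edge (u,v) satisfies d_H(φ(u),φ(v)) ≤ 2. Then every directed cycle in G^φ is a 2-cycle consisting of the two relaxed arcs between a pair of sibling nodes of H; in particular, φ is strongly acyclic. -/

import Mathlib

/-- A phylogenetic tree: a finite rooted full binary tree. Every vertex has a `parent`
(the root being its own parent), iterating `parent` from any vertex reaches the root,
and every vertex has either `0` or `2` children. -/
structure PhyloTree (V : Type*) [Fintype V] [DecidableEq V] where
  root : V
  parent : V → V
  parent_root : parent root = root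
  toRoot : ∀ v : V, ∃ n : ℕ, parent^[n] v = root
  binary : ∀ v : V,
      (Finset.univ.filter fun w => parent w = v ∧ w ≠ root).card = 0 ∨
      (Finset.univ.filter fun w => parent w = v ∧ w ≠ root).card = 2

namespace PhyloTree

variable {V : Type*} [Fintype V] [DecidableEq V]

/-- `T.ParentArc a b` : `a` is the parent of `b`; these are the arcs of the tree
(the strict arcs, forming the set `A_par`). -/
def ParentArc (T : PhyloTree V) (a b : V) : Prop :=
  T.parent b = a ∧ b ≠ T.root

/-- `T.Anc a b` : `a` is an ancestor of `b`, equivalently `b` is a descendant of `a`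
(this includes the case `a = b`). -/
def Anc (T : PhyloTree V) (a b : V) : Prop :=
  ∃ n : ℕ, T.parent^[n] b = a

/-- `a` and `b` are incomparable: neither is an ancestor of the other. -/
def Incomp (T : PhyloTree V) (a b : V) : Prop :=
  ¬ T.Anc a b ∧ ¬ T.Anc b a

/-- `a` and `b` are siblings: distinct nodes with the same parent. -/
def Sibling (T : PhyloTree V) (a b : V) : Prop :=
  a ≠ b ∧ a ≠ T.root ∧ b ≠ T.root ∧ T.parent a = T.parent b

/-- `a` and `b` are cousins: their parents are siblings. -/
def Cousin (T : PhyloTree V) (a b : V) : Prop :=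
  a ≠ T.root ∧ b ≠ T.root ∧ T.Sibling (T.parent a) (T.parent b)

/-- A leaf: a node with no children. -/
def IsLeaf (T : PhyloTree V) (a : V) : Prop := ∀ b, ¬ T.ParentArc a b

theorem parentArc_irrefl (T : PhyloTree V) (a : V) : ¬ T.ParentArc a a := by
  rintro ⟨h, hr⟩
  obtain ⟨n, hn⟩ := T.toRoot a
  exact hr ((Function.iterate_fixed h n).symm.trans hn)

/-- The underlying undirected graph of the tree. -/
def ugraph (T : PhyloTree V) : SimpleGraph V where
  Adj a b := T.ParentArc a b ∨ T.ParentArc b a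
  symm := ⟨by intro _ _ h; exact Or.symm h⟩
  loopless := ⟨by intro a h; rcases h with h | h <;> exact T.parentArc_irrefl a h⟩

/-- `T.dist a b` : the number of edges on the unique undirected path between `a` and `b`. -/
noncomputable def dist (T : PhyloTree V) (a b : V) : ℕ := T.ugraph.dist a b

/-- `T.IsLCA c a b` : `c` is the lowest common ancestor of `a` and `b`. -/
def IsLCA (T : PhyloTree V) (c a b : V) : Prop :=
  T.Anc c a ∧ T.Anc c b ∧ ∀ d, T.Anc d a → T.Anc d b → T.Anc d c

/-- The level of a node: `-dist(v, root)`, so nodes closer to the root have higher level. -/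
noncomputable def level (T : PhyloTree V) (v : V) : ℤ := -(T.dist v T.root : ℤ)

/-- Arc `(a,b)` of the digraph `H⁺_d`: either a parent-to-child arc of the tree, or an
arc between distinct incomparable vertices at distance at most `d`. -/
def HplusArc (T : PhyloTree V) (d : ℕ) (a b : V) : Prop :=
  T.ParentArc a b ∨ (a ≠ b ∧ T.Incomp a b ∧ T.dist a b ≤ d)

/-- `(a,b) ∈ A_sib` : arcs (in both directions) between siblings. -/
def SibArc (T : PhyloTree V) (a b : V) : Prop := T.Sibling a b

/-- `(a,b) ∈ A_nep` : arcs (in both directions) between a node and a child of its sibling. -/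
def NepArc (T : PhyloTree V) (a b : V) : Prop :=
  (∃ s, T.Sibling s b ∧ T.ParentArc s a) ∨ (∃ s, T.Sibling s a ∧ T.ParentArc s b)

/-- `(a,b) ∈ A_gnep` : arcs (in both directions) between a node and a grandchild of its
sibling. -/
def GnepArc (T : PhyloTree V) (a b : V) : Prop :=
  (∃ s c, T.Sibling s b ∧ T.ParentArc s c ∧ T.ParentArc c a) ∨
  (∃ s c, T.Sibling s a ∧ T.ParentArc s c ∧ T.ParentArc c b)

/-- `(a,b) ∈ A_cos` : arcs (in both directions) between cousins. -/
def CosArc (T : PhyloTree V) (a b : V) : Prop := T.Cousin a b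

end PhyloTree

/-- A directed cycle in the digraph with arc relation `G`, represented as an injective
cyclic sequence `f` of `n ≥ 2` vertices in which every consecutive arc is present. -/
def IsDicycle {α : Type*} (G : α → α → Prop) {n : ℕ} (f : ZMod n → α) : Prop :=
  2 ≤ n ∧ Function.Injective f ∧ ∀ i, G (f i) (f (i + 1))

/-- There is a directed path from `s` to `t` in the digraph `G` containing at least one
strict arc (i.e. parent-to-child arc of the tree `T`); here strict arcs of the graphs we
consider are always arcs of `G`. -/
def StrictReach {V : Type*} [Fintype V] [DecidableEq V] (T : PhyloTree V)
    (G : V → V → Prop) (s t : V) : Prop :=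
  ∃ a b, Relation.ReflTransGen G s a ∧ T.ParentArc a b ∧ Relation.ReflTransGen G b t

section Reconciliation

variable {VH VP : Type*} [Fintype VH] [DecidableEq VH] [Fintype VP] [DecidableEq VP]

/-- Host-switch event: one of the children's images is incomparable to `hp`, the other is
a descendant of `hp`. -/
def SwitchEvent (TH : PhyloTree VH) (hp h1 h2 : VH) : Prop :=
  (TH.Incomp h1 hp ∧ TH.Anc hp h2) ∨ (TH.Incomp h2 hp ∧ TH.Anc hp h1)

/-- Cospeciation event: the children's images are incomparable with LCA `hp`. -/
def CospEvent (TH : PhyloTree VH) (hp h1 h2 : VH) : Prop :=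
  TH.Incomp h1 h2 ∧ TH.IsLCA hp h1 h2

/-- Duplication event: both children's images are descendants of `hp`, and neither the
host-switch case nor the cospeciation case applies. -/
def DupEvent (TH : PhyloTree VH) (hp h1 h2 : VH) : Prop :=
  TH.Anc hp h1 ∧ TH.Anc hp h2 ∧ ¬ SwitchEvent TH hp h1 h2 ∧ ¬ CospEvent TH hp h1 h2

/-- `φ` is a reconciliation of `(H, P, σ)`: it agrees with `σ` on leaves, and at every
internal node exactly one of the three events (host switch, cospeciation, duplication)
applies. -/
def IsReconciliation (TH : PhyloTree VH) (TP : PhyloTree VP) (σ : VP → VH)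
    (φ : VP → VH) : Prop :=
  (∀ p, TP.IsLeaf p → φ p = σ p) ∧
  ∀ p p1 p2, TP.ParentArc p p1 → TP.ParentArc p p2 → p1 ≠ p2 →
    SwitchEvent TH (φ p) (φ p1) (φ p2) ∨ CospEvent TH (φ p) (φ p1) (φ p2) ∨
      DupEvent TH (φ p) (φ p1) (φ p2)

/-- `(u,v)` is a switching edge of `P` with respect to `φ` : `u` is the parent of `v` in
`P` and `φ u`, `φ v` are incomparable in `H`. -/
def SwitchingEdge (TH : PhyloTree VH) (TP : PhyloTree VP) (φ : VP → VH) (u v : VP) : Prop :=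
  TP.ParentArc u v ∧ TH.Incomp (φ u) (φ v)

/-- Arc `(a,b)` of `G^φ` : either a (strict) parent-to-child arc of `H`, or a (relaxed)
arc coming, in either direction, from a switching edge. -/
def GphiArc (TH : PhyloTree VH) (TP : PhyloTree VP) (φ : VP → VH) (a b : VH) : Prop :=
  TH.ParentArc a b ∨
    ∃ u v, SwitchingEdge TH TP φ u v ∧ ((a = φ u ∧ b = φ v) ∨ (a = φ v ∧ b = φ u))

/-- `φ` is strongly acyclic: no directed cycle of `G^φ` contains a strict arc. -/
def StronglyAcyclic (TH : PhyloTree VH) (TP : PhyloTree VP) (φ : VP → VH) : Prop :=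
  ¬ ∃ (n : ℕ) (f : ZMod n → VH),
      IsDicycle (GphiArc TH TP φ) f ∧ ∃ i, TH.ParentArc (f i) (f (i + 1))

/-- Arc `(a,b)` of `D^φ` : either an arc of `H`, or an arc from the parent of `φ u` or of
`φ v` (when it exists) to `φ u'` or `φ v'`, for switching edges `(u,v)`, `(u',v')` with
`u` an ancestor of `u'` in `P`. -/
def DphiArc (TH : PhyloTree VH) (TP : PhyloTree VP) (φ : VP → VH) (a b : VH) : Prop :=
  TH.ParentArc a b ∨
    ∃ u v u' v', SwitchingEdge TH TP φ u v ∧ SwitchingEdge TH TP φ u' v' ∧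
      TP.Anc u u' ∧
      ((φ u ≠ TH.root ∧ a = TH.parent (φ u)) ∨ (φ v ≠ TH.root ∧ a = TH.parent (φ v))) ∧
      (b = φ u' ∨ b = φ v')

/-- `φ` is acyclic (time-feasible): `D^φ` contains no directed cycle. -/
def Acyclic (TH : PhyloTree VH) (TP : PhyloTree VP) (φ : VP → VH) : Prop :=
  ¬ ∃ (n : ℕ) (f : ZMod n → VH), IsDicycle (DphiArc TH TP φ) f

end Reconciliation

/-- `G` contains no Type 1 cycle `(h_j, h_k, h_{k1})`, where `h_j`, `h_k` are siblings and
`h_{k1}` is a child of `h_k`. -/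
def NoType1 {V : Type*} [Fintype V] [DecidableEq V] (T : PhyloTree V)
    (G : V → V → Prop) : Prop :=
  ¬ ∃ hj hk hk1, T.Sibling hj hk ∧ T.ParentArc hk hk1 ∧
      G hj hk ∧ G hk hk1 ∧ G hk1 hj

/-- `G` contains no Type 2 cycle `(h_j, h_{j1}, h_k, h_{k1})`, where `h_j`, `h_k` are
siblings, `h_{j1}` is a child of `h_j` and `h_{k1}` is a child of `h_k`. -/
def NoType2 {V : Type*} [Fintype V] [DecidableEq V] (T : PhyloTree V)
    (G : V → V → Prop) : Prop :=
  ¬ ∃ hj hj1 hk hk1, T.Sibling hj hk ∧ T.ParentArc hj hj1 ∧ T.ParentArc hk hk1 ∧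
      G hj hj1 ∧ G hj1 hk ∧ G hk hk1 ∧ G hk1 hj

/-- `G` contains no Type 3 cycle `(h_j, h_{k1}, h_{k3}, h_{k2})`, where `h_j`, `h_k` are
siblings, `h_{k1}`, `h_{k2}` are the children of `h_k`, and `h_{k3}` is a child of
`h_{k1}`. -/
def NoType3 {V : Type*} [Fintype V] [DecidableEq V] (T : PhyloTree V)
    (G : V → V → Prop) : Prop :=
  ¬ ∃ hj hk hk1 hk2 hk3, T.Sibling hj hk ∧ hk1 ≠ hk2 ∧
      T.ParentArc hk hk1 ∧ T.ParentArc hk hk2 ∧ T.ParentArc hk1 hk3 ∧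
      G hj hk1 ∧ G hk1 hk3 ∧ G hk3 hk2 ∧ G hk2 hj

variable {VH VP : Type*} [Fintype VH] [DecidableEq VH] [Fintype VP] [DecidableEq VP]

/-! A relaxed arc joins incomparable nodes at distance at most 2, that is, siblings. The depth
of a node never decreases along an arc of `G^φ` and increases along strict arcs, so it is
constant around a directed cycle: every arc of the cycle joins siblings. Since a node of a
binary tree has a single sibling, the cycle has length 2. -/

theorem apply_add_eq_of_forall_le_apply_add {G M : Type*} [AddGroup G] [Fintype G]
    [AddCommMonoid M] [PartialOrder M] [IsOrderedCancelAddMonoid M] {g : G → M} {a : G}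
    (hg : ∀ i, g i ≤ g (i + a)) (i : G) : g (i + a) = g i := by
  have hsum : ∑ j, g j = ∑ j, g (j + a) :=
    (Fintype.sum_equiv (Equiv.addRight a) _ _ fun _ => rfl).symm
  exact ((Finset.sum_eq_sum_iff_of_le fun j _ => hg j).mp hsum i (Finset.mem_univ i)).symm

namespace PhyloTree

variable {V : Type*} [Fintype V] [DecidableEq V] {T : PhyloTree V} {a b c : V}

theorem anc_refl (a : V) : T.Anc a a := ⟨0, rfl⟩

theorem Anc.trans (hab : T.Anc a b) (hbc : T.Anc b c) : T.Anc a c := by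
  obtain ⟨m, hm⟩ := hab
  obtain ⟨n, hn⟩ := hbc
  exact ⟨m + n, by rw [Function.iterate_add_apply, hn, hm]⟩

theorem ParentArc.anc (h : T.ParentArc a b) : T.Anc a b := ⟨1, h.1⟩

theorem Incomp.ne (h : T.Incomp a b) : a ≠ b := by
  rintro rfl
  exact h.1 (anc_refl a)

theorem Sibling.symm (h : T.Sibling a b) : T.Sibling b a :=
  ⟨h.1.symm, h.2.2.1, h.2.1, h.2.2.2.symm⟩

theorem Sibling.not_parentArc (h : T.Sibling a b) : ¬ T.ParentArc a b := fun hab =>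
  T.parentArc_irrefl a ⟨h.2.2.2 ▸ hab.1, h.2.1⟩

theorem Sibling.eq_of_sibling (ha : T.Sibling a c) (hb : T.Sibling b c) : a = b := by
  by_contra hab
  have hsub : ({a, b, c} : Finset V) ⊆
      Finset.univ.filter fun w => T.parent w = T.parent c ∧ w ≠ T.root := by
    intro w hw
    simp only [Finset.mem_insert, Finset.mem_singleton] at hw
    rcases hw with rfl | rfl | rfl
    · simpa using ⟨ha.2.2.2, ha.2.1⟩
    · simpa using ⟨hb.2.2.2, hb.2.1⟩
    · simpa using ha.2.2.1
  have hcard := Finset.card_le_card hsub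
  rw [Finset.card_eq_three.mpr ⟨a, b, c, hab, ha.1, hb.1, rfl⟩] at hcard
  rcases T.binary (T.parent c) with h | h <;> omega

theorem reachable_root (T : PhyloTree V) (v : V) : T.ugraph.Reachable v T.root := by
  obtain ⟨n, hn⟩ := T.toRoot v
  induction n generalizing v with
  | zero => exact hn ▸ SimpleGraph.Reachable.refl _
  | succ n ih =>
    by_cases hv : v = T.root
    · exact hv ▸ SimpleGraph.Reachable.refl _
    · exact (SimpleGraph.Adj.reachable (Or.inr ⟨rfl, hv⟩)).trans (ih _ hn)

theorem Incomp.sibling_of_dist_le_two (hinc : T.Incomp a b) (hd : T.dist a b ≤ 2) :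
    T.Sibling a b := by
  obtain ⟨w, hw⟩ :=
    ((T.reachable_root a).trans (T.reachable_root b).symm).exists_walk_length_eq_dist
  rw [dist, ← hw] at hd
  match w, hd with
  | .nil, _ => exact absurd rfl hinc.ne
  | .cons h .nil, _ => exact h.elim (fun h => absurd h.anc hinc.1) (fun h => absurd h.anc hinc.2)
  | .cons h₁ (.cons h₂ .nil), _ =>
    rcases h₁ with h₁ | h₁ <;> rcases h₂ with h₂ | h₂
    · exact absurd (h₁.anc.trans h₂.anc) hinc.1
    · exact absurd (h₁.1.symm.trans h₂.1) hinc.ne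
    · exact ⟨hinc.ne, h₁.2, h₂.2, h₁.1.trans h₂.1.symm⟩
    · exact absurd (h₂.anc.trans h₁.anc) hinc.2
  | .cons _ (.cons _ (.cons _ _)), hd => simp at hd

variable (T) in
noncomputable def depth (v : V) : ℕ := Nat.find (T.toRoot v)

theorem ParentArc.depth_eq (h : T.ParentArc a b) : T.depth b = T.depth a + 1 :=
  h.1 ▸ Nat.find_comp_succ (T.toRoot b) (T.toRoot (T.parent b)) h.2

theorem Sibling.depth_eq (h : T.Sibling a b) : T.depth a = T.depth b := by
  rw [ParentArc.depth_eq ⟨rfl, h.2.1⟩, ParentArc.depth_eq ⟨rfl, h.2.2.1⟩, h.2.2.2]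

theorem sibling_of_cyclic_parentArc_or_sibling {n : ℕ} [NeZero n] {f : ZMod n → V}
    (hf : ∀ i, T.ParentArc (f i) (f (i + 1)) ∨ T.Sibling (f i) (f (i + 1))) (i : ZMod n) :
    T.Sibling (f i) (f (i + 1)) := by
  have hmono : ∀ j, T.depth (f j) ≤ T.depth (f (j + 1)) := fun j =>
    (hf j).elim (fun h => h.depth_eq ▸ Nat.le_succ _) (fun h => h.depth_eq.le)
  refine (hf i).resolve_left fun h => ?_
  have := apply_add_eq_of_forall_le_apply_add (g := T.depth ∘ f) hmono i
  simp only [Function.comp_apply, h.depth_eq] at this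
  omega

theorem eq_two_of_injective_of_cyclic_sibling {n : ℕ} (hn : 2 ≤ n) {f : ZMod n → V}
    (hinj : Function.Injective f) (hf : ∀ i, T.Sibling (f i) (f (i + 1))) : n = 2 := by
  have h20 : (0 : ZMod n) + 1 + 1 = 0 := hinj ((hf (0 + 1)).symm.eq_of_sibling (hf 0))
  have hdvd : n ∣ 2 := (ZMod.natCast_eq_zero_iff 2 n).mp (by simpa [one_add_one_eq_two] using h20)
  exact le_antisymm (Nat.le_of_dvd two_pos hdvd) hn

end PhyloTree

theorem gphiArc_parentArc_or_sibling {TH : PhyloTree VH} {TP : PhyloTree VP} {φ : VP → VH}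
    (hdist : ∀ u v, SwitchingEdge TH TP φ u v → TH.dist (φ u) (φ v) ≤ 2) {a b : VH}
    (h : GphiArc TH TP φ a b) : TH.ParentArc a b ∨ TH.Sibling a b := by
  rcases h with h | ⟨u, v, hsw, ⟨rfl, rfl⟩ | ⟨rfl, rfl⟩⟩
  · exact Or.inl h
  · exact Or.inr (hsw.2.sibling_of_dist_le_two (hdist u v hsw))
  · exact Or.inr (hsw.2.sibling_of_dist_le_two (hdist u v hsw)).symm

theorem dist_two_cycles_are_sibling_digons_general
    (TH : PhyloTree VH) (TP : PhyloTree VP)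
    (φ : VP → VH)
    (hdist : ∀ u v, SwitchingEdge TH TP φ u v → TH.dist (φ u) (φ v) ≤ 2) :
    (∀ (n : ℕ) (f : ZMod n → VH), IsDicycle (GphiArc TH TP φ) f →
      n = 2 ∧ ∀ i, TH.Sibling (f i) (f (i + 1)) ∧ ¬ TH.ParentArc (f i) (f (i + 1))) ∧
    StronglyAcyclic TH TP φ := by
  have hcycle : ∀ (n : ℕ) (f : ZMod n → VH), IsDicycle (GphiArc TH TP φ) f →
      n = 2 ∧ ∀ i, TH.Sibling (f i) (f (i + 1)) ∧ ¬ TH.ParentArc (f i) (f (i + 1)) := by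
    rintro n f ⟨hn, hinj, harc⟩
    have : NeZero n := ⟨by omega⟩
    have hsib := PhyloTree.sibling_of_cyclic_parentArc_or_sibling fun i =>
      gphiArc_parentArc_or_sibling hdist (harc i)
    exact ⟨PhyloTree.eq_two_of_injective_of_cyclic_sibling hn hinj hsib,
      fun i => ⟨hsib i, (hsib i).not_parentArc⟩⟩
  exact ⟨hcycle, fun ⟨n, f, hf, i, hi⟩ => ((hcycle n f hf).2 i).2 hi⟩

/-- If every switching edge `(u,v)` of a reconciliation `φ` satisfies
`d_H(φ u, φ v) ≤ 2`, then every directed cycle of `G^φ` is a 2-cycle consisting of the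
two relaxed arcs between a pair of siblings of `H`; in particular `φ` is strongly
acyclic. -/
theorem dist_two_cycles_are_sibling_digons
    (TH : PhyloTree VH) (TP : PhyloTree VP) (σ : VP → VH)
    (hσ : ∀ p, TP.IsLeaf p → TH.IsLeaf (σ p))
    (φ : VP → VH) (hφ : IsReconciliation TH TP σ φ)
    (hdist : ∀ u v, SwitchingEdge TH TP φ u v → TH.dist (φ u) (φ v) ≤ 2) :
    (∀ (n : ℕ) (f : ZMod n → VH), IsDicycle (GphiArc TH TP φ) f →
      n = 2 ∧ ∀ i, TH.Sibling (f i) (f (i + 1)) ∧ ¬ TH.ParentArc (f i) (f (i + 1))) ∧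
    StronglyAcyclic TH TP φ :=
  dist_two_cycles_are_sibling_digons_general TH TP φ hdist
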